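/- A path-connected open subset of the plane containing a rational point is rationally path-connected: any two rational points in it can be joined by a path within the set passing only through finitely many segment-directions with rational endpoints at vertices; in particular, the set of rational points of $S$, with edges between rational points $p, q$ whenever the segment $[p,q] \subseteq S$, forms a connected graph. -/

import Mathlib

/-!
Call a vertex near a point `x ∈ S` if it lies in a convex neighbourhood of `x` inside `S`. Two
vertices near the same point are joined through any rational point (these are dense) of the
intersection of their neighbourhoods, and a vertex near `x` stays near every point close to `x`.
Hence "every vertex near `x` is joined to every vertex near `y`" holds for `y` close to `x` and is
transitive, so connectedness of `S` makes it hold for all `x, y ∈ S`.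
-/

/-- A point of the plane has rational coordinates. -/
def IsRatPt (p : EuclideanSpace ℝ (Fin 2)) : Prop :=
  (∃ a : ℚ, p 0 = (a : ℝ)) ∧ (∃ b : ℚ, p 1 = (b : ℝ))

open Filter Topology

variable {E : Type*} [AddCommGroup E] [Module ℝ E]

def segmentGraph (S D : Set E) : SimpleGraph {p : E // p ∈ S ∧ p ∈ D} :=
  SimpleGraph.fromRel fun p q => segment ℝ p.1 q.1 ⊆ S

theorem segmentGraph.reachable_of_convex {S D C : Set E} (hC : Convex ℝ C) (hCS : C ⊆ S)
    {u w : {p : E // p ∈ S ∧ p ∈ D}} (hu : u.1 ∈ C) (hw : w.1 ∈ C) :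
    (segmentGraph S D).Reachable u w := by
  by_cases huw : u = w
  · exact huw ▸ .refl u
  · exact SimpleGraph.Adj.reachable
      ((SimpleGraph.fromRel_adj _ _ _).2 ⟨huw, .inl ((hC.segment_subset hu hw).trans hCS)⟩)

variable [TopologicalSpace E]

def InConvexNhd (S : Set E) (x u : E) : Prop :=
  ∃ B ∈ 𝓝 x, Convex ℝ B ∧ B ⊆ S ∧ u ∈ B

theorem inConvexNhd_self [LocallyConvexSpace ℝ E] {S : Set E} (hS : IsOpen S) {x : E}
    (hx : x ∈ S) : InConvexNhd S x x := by
  obtain ⟨B, hB, hBc, hBS⟩ :=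
    (locallyConvexSpace_iff_exists_convex_subset ℝ E).1 ‹_› x S (hS.mem_nhds hx)
  exact ⟨B, hB, hBc, hBS, mem_of_mem_nhds hB⟩

theorem InConvexNhd.eventually {S : Set E} {x u : E} (h : InConvexNhd S x u) :
    ∀ᶠ y in 𝓝 x, InConvexNhd S y u := by
  obtain ⟨B, hB, hBc, hBS, huB⟩ := h
  filter_upwards [eventually_mem_nhds_iff.2 hB] with y hy
  exact ⟨B, hy, hBc, hBS, huB⟩

namespace segmentGraph

variable {S D : Set E}

theorem exists_inConvexNhd [LocallyConvexSpace ℝ E] (hS : IsOpen S) (hD : Dense D) {x : E}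
    (hx : x ∈ S) : ∃ u : {p : E // p ∈ S ∧ p ∈ D}, InConvexNhd S x u.1 := by
  obtain ⟨B, hB, hBc, hBS, -⟩ := inConvexNhd_self hS hx
  obtain ⟨p, hpD, hpB⟩ := hD.inter_nhds_nonempty hB
  exact ⟨⟨p, hBS hpB, hpD⟩, B, hB, hBc, hBS, hpB⟩

theorem reachable_of_inConvexNhd (hD : Dense D) {x : E} {u w : {p : E // p ∈ S ∧ p ∈ D}}
    (hu : InConvexNhd S x u.1) (hw : InConvexNhd S x w.1) :
    (segmentGraph S D).Reachable u w := by
  obtain ⟨B, hB, hBc, hBS, huB⟩ := hu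
  obtain ⟨B', hB', hB'c, hB'S, hwB'⟩ := hw
  obtain ⟨m, hmD, hmB, hmB'⟩ := hD.inter_nhds_nonempty (inter_mem hB hB')
  let v : {p : E // p ∈ S ∧ p ∈ D} := ⟨m, hBS hmB, hmD⟩
  exact (reachable_of_convex (w := v) hBc hBS huB hmB).trans
    (reachable_of_convex hB'c hB'S hmB' hwB')

theorem reachable_of_inConvexNhd_of_mem [LocallyConvexSpace ℝ E] (hS : IsOpen S)
    (hconn : IsPreconnected S) (hD : Dense D) {x y : E} (hx : x ∈ S) (hy : y ∈ S)
    {u w : {p : E // p ∈ S ∧ p ∈ D}} (hu : InConvexNhd S x u.1) (hw : InConvexNhd S y w.1) :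
    (segmentGraph S D).Reachable u w := by
  refine hconn.induction₂' (fun x y => ∀ u w : {p : E // p ∈ S ∧ p ∈ D},
    InConvexNhd S x u.1 → InConvexNhd S y w.1 → (segmentGraph S D).Reachable u w)
    ?_ ?_ hx hy u w hu hw
  · intro x hx
    obtain ⟨m, hm⟩ := exists_inConvexNhd hS hD hx
    refine (hm.eventually.filter_mono nhdsWithin_le_nhds).mono fun y hmy => ⟨?_, ?_⟩
    · exact fun u w hu hw =>
        (reachable_of_inConvexNhd hD hu hm).trans (reachable_of_inConvexNhd hD hmy hw)
    · exact fun u w hu hw =>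
        (reachable_of_inConvexNhd hD hu hmy).trans (reachable_of_inConvexNhd hD hm hw)
  · intro x y z _ hy _ hxy hyz u w hu hw
    obtain ⟨m, hm⟩ := exists_inConvexNhd hS hD hy
    exact (hxy u m hu hm).trans (hyz m w hm hw)

theorem connected [LocallyConvexSpace ℝ E] (hS : IsOpen S) (hconn : IsConnected S)
    (hD : Dense D) : (segmentGraph S D).Connected := by
  obtain ⟨x, hx⟩ := hconn.nonempty
  obtain ⟨u, -⟩ := exists_inConvexNhd hS hD hx
  refine (SimpleGraph.connected_iff _).2 ⟨fun v w => ?_, ⟨u⟩⟩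
  exact reachable_of_inConvexNhd_of_mem hS hconn.isPreconnected hD v.2.1 w.2.1
    (inConvexNhd_self hS v.2.1) (inConvexNhd_self hS w.2.1)

end segmentGraph

theorem dense_setOf_isRatPt : Dense {p : EuclideanSpace ℝ (Fin 2) | IsRatPt p} := by
  have h : Dense ((PiLp.homeomorph 2 fun _ : Fin 2 => ℝ) ⁻¹'
      Set.univ.pi fun _ => Set.range ((↑) : ℚ → ℝ)) :=
    (dense_pi _ fun _ _ => Rat.denseRange_cast).preimage (Homeomorph.isOpenMap _)
  convert h using 1
  ext p
  simp only [IsRatPt, eq_comm, Set.mem_ofPred_eq, Set.mem_preimage, Set.mem_pi, Set.mem_univ,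
    Set.mem_range, forall_const, Fin.forall_fin_two]
  rfl

theorem stmt3_general (S : Set (EuclideanSpace ℝ (Fin 2))) (hopen : IsOpen S)
    (hconn : IsPathConnected S) :
    (SimpleGraph.fromRel
      (fun p q : {p : EuclideanSpace ℝ (Fin 2) // p ∈ S ∧ IsRatPt p} =>
        segment ℝ p.1 q.1 ⊆ S)).Connected :=
  segmentGraph.connected (D := {p | IsRatPt p}) hopen hconn.isConnected dense_setOf_isRatPt

theorem stmt3 (S : Set (EuclideanSpace ℝ (Fin 2))) (hopen : IsOpen S)
    (hconn : IsPathConnected S) (hne : ∃ p : EuclideanSpace ℝ (Fin 2), p ∈ S ∧ IsRatPt p) :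
    (SimpleGraph.fromRel
      (fun p q : {p : EuclideanSpace ℝ (Fin 2) // p ∈ S ∧ IsRatPt p} =>
        segment ℝ p.1 q.1 ⊆ S)).Connected :=
  stmt3_general S hopen hconn
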